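/- arXiv:0806.1652 — 2 statements merged into one kernel-verified Lean document; each statement's English description precedes it below -/
import Mathlib

section
/- For every n ≥ 1, every tuning parameter η_n > 0 and all nonnegative real numbers a_n and b_n, the infimal coverage probability of the interval C_{S,n} = [θ̂_S − a_n, θ̂_S + b_n] is given by inf_{θ∈ℝ} P_{n,θ}(θ ∈ C_{S,n}) = Φ(n^{1/2}(a_n − η_n)) − Φ(n^{1/2}(−b_n − η_n)) if a_n ≤ b_n, and = Φ(n^{1/2}(b_n − η_n)) − Φ(n^{1/2}(−a_n − η_n)) if a_n > b_n. -/
open MeasureTheory ProbabilityTheory Filter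
open scoped NNReal

/-- Standard normal cumulative distribution function Φ. -/
noncomputable def stdNormCDF (x : ℝ) : ℝ :=
  ((gaussianReal 0 1) (Set.Iic x)).toReal

/-- Soft-thresholding (LASSO) estimator with threshold η, as a function of ȳ. -/
noncomputable def softThresh (η y : ℝ) : ℝ := Real.sign y * max (|y| - η) 0

/-- Hard-thresholding estimator with threshold η, as a function of ȳ. -/
noncomputable def hardThresh (η y : ℝ) : ℝ := if η < |y| then y else 0

/-- Adaptive LASSO estimator with tuning parameter η, as a function of ȳ. -/
noncomputable def adaLasso (η y : ℝ) : ℝ := if |y| ≤ η then 0 else y - η ^ 2 / y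

/-- Coverage probability `P_{n,θ}(θ ∈ [est(ȳ) - a, est(ȳ) + b])` in the
known-variance case (σ = 1), where ȳ ~ N(θ, 1/n). -/
noncomputable def cover (n : ℕ) (est : ℝ → ℝ) (a b θ : ℝ) : ℝ :=
  ((gaussianReal θ ((n : ℝ≥0))⁻¹)
    {y : ℝ | est y - a ≤ θ ∧ θ ≤ est y + b}).toReal

/-!
Write `Φ` for `stdNormCDF` and `s = √n`. The preimage of `[c, d]` under soft thresholding is
`[c - η, d + η]` when `c ≤ 0 ≤ d`, with the left (right) endpoint moved inward by `2η` when
`c > 0` (`d < 0`). So the coverage event is an interval in `ȳ`, and the coverage probability is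
a difference of two values of `Φ` that is constant on each of the regimes `θ < -a`,
`-a ≤ θ ≤ b`, `b < θ`. The middle value dominates the left one, so the infimum is the smaller
of the two outer values. By `Φ (-x) = 1 - Φ x`, comparing these amounts to comparing the
standard normal masses of `[s a, s b] ∓ s η`; as `a ≥ 0`, the density decreases pointwise under
the shift to the right.
-/

open Set

lemma stdNormCDF_eq_cdf : stdNormCDF = cdf (gaussianReal 0 1) :=
  funext fun x ↦ (cdf_eq_real _ x).symm

lemma monotone_stdNormCDF : Monotone stdNormCDF :=
  stdNormCDF_eq_cdf ▸ monotone_cdf _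

lemma stdNormCDF_neg (x : ℝ) : stdNormCDF (-x) = 1 - stdNormCDF x := by
  have := nullSingletonClass_gaussianReal (μ := 0) one_ne_zero
  have hneg : (gaussianReal 0 1).map (fun y ↦ -y) = gaussianReal 0 1 := by
    rw [gaussianReal_map_neg, neg_zero]
  calc stdNormCDF (-x) = ((gaussianReal 0 1).map (fun y ↦ -y)).real (Iic (-x)) := by
        rw [hneg]; rfl
    _ = (gaussianReal 0 1).real (Ici x) := by
        rw [map_measureReal_apply (by fun_prop) measurableSet_Iic]
        exact congrArg _ ((neg_Iic (-x)).trans (by rw [neg_neg]))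
    _ = 1 - (gaussianReal 0 1).real (Iio x) := by
        rw [← compl_Iio, measureReal_compl measurableSet_Iio, probReal_univ]
    _ = 1 - stdNormCDF x := by
        rw [measureReal_congr Iio_ae_eq_Iic, measureReal_def]; rfl

lemma stdNormCDF_neg_sub_stdNormCDF_neg (x y : ℝ) :
    stdNormCDF (-y) - stdNormCDF (-x) = stdNormCDF x - stdNormCDF y := by
  rw [stdNormCDF_neg, stdNormCDF_neg]; ring

lemma stdNormCDF_sub_eq_real_Ioc {x y : ℝ} (h : x ≤ y) :
    stdNormCDF y - stdNormCDF x = (gaussianReal 0 1).real (Ioc x y) := by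
  rw [measureReal_def, ← measure_cdf (gaussianReal 0 1), StieltjesFunction.measure_Ioc,
    ENNReal.toReal_ofReal (sub_nonneg.2 (monotone_cdf _ h)), stdNormCDF_eq_cdf]

lemma gaussianReal_real_Icc (μ : ℝ) {v : ℝ≥0} (hv : v ≠ 0) {L U : ℝ} (h : L ≤ U) :
    (gaussianReal μ v).real (Icc L U)
      = stdNormCDF ((U - μ) / √v) - stdNormCDF ((L - μ) / √v) := by
  have := nullSingletonClass_gaussianReal (μ := 0) one_ne_zero
  have hσ : 0 < √(v : ℝ) := Real.sqrt_pos.2 (by positivity)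
  have hmap : gaussianReal μ v = ((gaussianReal 0 1).map (√v * ·)).map (· + μ) := by
    rw [gaussianReal_map_const_mul, gaussianReal_map_add_const, mul_zero, zero_add, mul_one]
    congr
    ext
    simp
  rw [hmap, map_measureReal_apply (by fun_prop) measurableSet_Icc, preimage_add_const_Icc,
    map_measureReal_apply (by fun_prop) measurableSet_Icc, preimage_const_mul_Icc₀ _ _ hσ,
    ← measureReal_congr Ioc_ae_eq_Icc, stdNormCDF_sub_eq_real_Ioc]
  gcongr

lemma gaussianPDFReal_le_of_sq_le (μ : ℝ) (v : ℝ≥0) {x y : ℝ} (h : (x - μ) ^ 2 ≤ (y - μ) ^ 2) :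
    gaussianPDFReal μ v y ≤ gaussianPDFReal μ v x := by
  unfold gaussianPDFReal
  gcongr

lemma stdNormCDF_sub_eq_integral {x y : ℝ} (h : x ≤ y) :
    stdNormCDF y - stdNormCDF x = ∫ t in x..y, gaussianPDFReal 0 1 t := by
  rw [stdNormCDF_sub_eq_real_Ioc h, measureReal_def,
    gaussianReal_apply_eq_integral 0 one_ne_zero,
    ENNReal.toReal_ofReal (setIntegral_nonneg measurableSet_Ioc
      fun t _ ↦ gaussianPDFReal_nonneg 0 1 t), intervalIntegral.integral_of_le h]

lemma stdNormCDF_shift_sub_le {x y δ : ℝ} (hδ : 0 ≤ δ) (hx : 0 ≤ 2 * x + δ) (hxy : x ≤ y) :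
    stdNormCDF (y + δ) - stdNormCDF (x + δ) ≤ stdNormCDF y - stdNormCDF x := by
  rw [stdNormCDF_sub_eq_integral (by linarith), stdNormCDF_sub_eq_integral hxy,
    ← intervalIntegral.integral_comp_add_right]
  refine intervalIntegral.integral_mono_on hxy
    ((integrable_gaussianPDFReal 0 1).comp_add_right δ).intervalIntegrable
    (integrable_gaussianPDFReal 0 1).intervalIntegrable fun t ht ↦ ?_
  -- `t` lies to the right of `-δ / 2`, so `t + δ` is farther from the mean than `t`
  exact gaussianPDFReal_le_of_sq_le 0 1 (by nlinarith [ht.1])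

lemma stdNormCDF_sub_le_sub_of_le {p q e : ℝ} (hp : 0 ≤ p) (hpq : p ≤ q) (he : 0 ≤ e) :
    stdNormCDF (p - e) - stdNormCDF (-q - e) ≤ stdNormCDF (q - e) - stdNormCDF (-p - e) := by
  have h := stdNormCDF_shift_sub_le (x := p - e) (y := q - e) (δ := 2 * e) (by linarith)
    (by linarith) (by linarith)
  rw [show -q - e = -(q - e + 2 * e) by ring, show -p - e = -(p - e + 2 * e) by ring,
    stdNormCDF_neg, stdNormCDF_neg]
  linarith

lemma softThresh_eq_ite {η : ℝ} (hη : 0 ≤ η) (y : ℝ) :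
    softThresh η y = if η < y then y - η else if y < -η then y + η else 0 := by
  rcases lt_trichotomy y 0 with hy | rfl | hy
  · rw [softThresh, Real.sign_of_neg hy, abs_of_neg hy]
    split_ifs <;> first | linarith | (rw [max_eq_left (by linarith)]; ring) |
      (rw [max_eq_right (by linarith)]; ring)
  · simp [softThresh, hη.not_gt]
  · rw [softThresh, Real.sign_of_pos hy, abs_of_pos hy]
    split_ifs <;> first | linarith | (rw [max_eq_left (by linarith)]; ring) |
      (rw [max_eq_right (by linarith)]; ring)

lemma le_softThresh_iff_of_pos {η c : ℝ} (hη : 0 ≤ η) (y : ℝ) (hc : 0 < c) :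
    c ≤ softThresh η y ↔ c + η ≤ y := by
  rw [softThresh_eq_ite hη]; split_ifs <;> constructor <;> intro <;> linarith

lemma le_softThresh_iff_of_nonpos {η c : ℝ} (hη : 0 ≤ η) (y : ℝ) (hc : c ≤ 0) :
    c ≤ softThresh η y ↔ c - η ≤ y := by
  rw [softThresh_eq_ite hη]; split_ifs <;> constructor <;> intro <;> linarith

lemma softThresh_le_iff_of_nonneg {η d : ℝ} (hη : 0 ≤ η) (y : ℝ) (hd : 0 ≤ d) :
    softThresh η y ≤ d ↔ y ≤ d + η := by
  rw [softThresh_eq_ite hη]; split_ifs <;> constructor <;> intro <;> linarith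

lemma softThresh_le_iff_of_neg {η d : ℝ} (hη : 0 ≤ η) (y : ℝ) (hd : d < 0) :
    softThresh η y ≤ d ↔ y ≤ d - η := by
  rw [softThresh_eq_ite hη]; split_ifs <;> constructor <;> intro <;> linarith

lemma cover_eq_of_iff {n : ℕ} (hn : n ≠ 0) {est : ℝ → ℝ} {a b θ L U : ℝ}
    (hest : ∀ y, θ - b ≤ est y ∧ est y ≤ θ + a ↔ L ≤ y ∧ y ≤ U) (hLU : L ≤ U) :
    cover n est a b θ = stdNormCDF (√n * (U - θ)) - stdNormCDF (√n * (L - θ)) := by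
  have hset : {y | est y - a ≤ θ ∧ θ ≤ est y + b} = Icc L U := by
    ext y
    rw [mem_ofPred_eq, mem_Icc, ← hest, sub_le_iff_le_add, sub_le_iff_le_add, and_comm]
  rw [cover, hset, ← measureReal_def, gaussianReal_real_Icc θ (by simpa using hn) hLU]
  simp only [NNReal.coe_inv, NNReal.coe_natCast, Real.sqrt_inv, div_inv_eq_mul, mul_comm]

lemma cover_softThresh_of_lt_neg {n : ℕ} (hn : n ≠ 0) {η a b θ : ℝ} (hη : 0 ≤ η) (ha : 0 ≤ a)
    (hb : 0 ≤ b) (hθ : θ < -a) :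
    cover n (softThresh η) a b θ = stdNormCDF (√n * (a - η)) - stdNormCDF (√n * (-b - η)) := by
  rw [cover_eq_of_iff hn (L := θ - b - η) (U := θ + a - η) (fun y ↦ by
    rw [le_softThresh_iff_of_nonpos hη y (by linarith),
      softThresh_le_iff_of_neg hη y (by linarith)]) (by linarith)]
  ring_nf

lemma cover_softThresh_of_mem_Icc {n : ℕ} (hn : n ≠ 0) {η a b θ : ℝ} (hη : 0 ≤ η)
    (hθ : θ ∈ Icc (-a) b) :
    cover n (softThresh η) a b θ = stdNormCDF (√n * (a + η)) - stdNormCDF (√n * (-b - η)) := by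
  rw [cover_eq_of_iff hn (L := θ - b - η) (U := θ + a + η) (fun y ↦ by
    rw [le_softThresh_iff_of_nonpos hη y (by linarith [hθ.2]),
      softThresh_le_iff_of_nonneg hη y (by linarith [hθ.1])]) (by linarith [hθ.1, hθ.2])]
  ring_nf

lemma cover_softThresh_of_lt {n : ℕ} (hn : n ≠ 0) {η a b θ : ℝ} (hη : 0 ≤ η) (ha : 0 ≤ a)
    (hb : 0 ≤ b) (hθ : b < θ) :
    cover n (softThresh η) a b θ = stdNormCDF (√n * (b - η)) - stdNormCDF (√n * (-a - η)) := by
  rw [cover_eq_of_iff hn (L := θ - b + η) (U := θ + a + η) (fun y ↦ by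
    rw [le_softThresh_iff_of_pos hη y (by linarith),
      softThresh_le_iff_of_nonneg hη y (by linarith)]) (by linarith),
    ← stdNormCDF_neg_sub_stdNormCDF_neg]
  ring_nf

lemma iInf_cover_softThresh {n : ℕ} (hn : n ≠ 0) {η a b : ℝ} (hη : 0 ≤ η) (ha : 0 ≤ a)
    (hb : 0 ≤ b) :
    ⨅ θ, cover n (softThresh η) a b θ =
      min (stdNormCDF (√n * (a - η)) - stdNormCDF (√n * (-b - η)))
        (stdNormCDF (√n * (b - η)) - stdNormCDF (√n * (-a - η))) := by
  have hbdd : BddBelow (range fun θ ↦ cover n (softThresh η) a b θ) :=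
    ⟨0, by rintro _ ⟨θ, rfl⟩; exact ENNReal.toReal_nonneg⟩
  refine le_antisymm (le_min ?_ ?_) (le_ciInf fun θ ↦ ?_)
  · exact (ciInf_le hbdd (-a - 1)).trans_eq
      (cover_softThresh_of_lt_neg hn hη ha hb (by linarith))
  · exact (ciInf_le hbdd (b + 1)).trans_eq (cover_softThresh_of_lt hn hη ha hb (by linarith))
  rcases lt_or_ge θ (-a) with hθ | hθa
  · exact (min_le_left _ _).trans_eq (cover_softThresh_of_lt_neg hn hη ha hb hθ).symm
  rcases lt_or_ge b θ with hθ | hθb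
  · exact (min_le_right _ _).trans_eq (cover_softThresh_of_lt hn hη ha hb hθ).symm
  rw [cover_softThresh_of_mem_Icc hn hη ⟨hθa, hθb⟩]
  refine (min_le_left _ _).trans (sub_le_sub_right (monotone_stdNormCDF ?_) _)
  gcongr
  linarith

/-- Proposition 1 (soft-thresholding): the infimal coverage probability of
`C_{S,n} = [θ̂_S - a, θ̂_S + b]`. -/
theorem stmt_0 (n : ℕ) (hn : 1 ≤ n) (η a b : ℝ) (hη : 0 < η) (ha : 0 ≤ a) (hb : 0 ≤ b) :
    (⨅ θ : ℝ, cover n (softThresh η) a b θ) =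
      if a ≤ b then
        stdNormCDF (Real.sqrt n * (a - η)) - stdNormCDF (Real.sqrt n * (-b - η))
      else
        stdNormCDF (Real.sqrt n * (b - η)) - stdNormCDF (Real.sqrt n * (-a - η)) := by
  rw [iInf_cover_softThresh (by omega) hη.le ha hb]
  split_ifs with hab
  · refine min_eq_left ?_
    simpa only [mul_sub, mul_neg] using stdNormCDF_sub_le_sub_of_le (p := √n * a) (q := √n * b)
      (e := √n * η) (by positivity) (by gcongr) (by positivity)
  · refine min_eq_right ?_
    simpa only [mul_sub, mul_neg] using stdNormCDF_sub_le_sub_of_le (p := √n * b) (q := √n * a)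
      (e := √n * η) (by positivity) (by gcongr; linarith) (by positivity)
end

section
/- For every n ≥ 1, every tuning parameter η_n > 0 and every δ with 0 < δ < 1, the half-lengths of the shortest δ-level intervals satisfy a_{n,H}* > a_{n,A}* > a_{n,S}* > n^{−1/2} Φ^{−1}((1 + δ)/2), where a_{n,S}*, a_{n,H}*, and a_{n,A}* are the unique nonnegative solutions of Φ(n^{1/2}(a − η_n)) − Φ(n^{1/2}(−a − η_n)) = δ, Φ(n^{1/2}(a − η_n)) − Φ(−n^{1/2} a) = δ, and Φ(n^{1/2}(a − η_n)) − Φ(−n^{1/2} sqrt(a² + η_n²)) = δ, respectively. -/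
open MeasureTheory ProbabilityTheory Filter
open scoped NNReal

/-- The inverse Φ⁻¹ of the standard normal cumulative distribution function. -/
noncomputable def stdNormCDFInv : ℝ → ℝ := Function.invFun stdNormCDF

/-! All three equations read `Φ(√n (a - η)) - Φ(-√n g(a)) = δ` with `g(a) = a + η`, `a` and
`√(a² + η²)` respectively. For `a > 0` one has `a < √(a² + η²) < a + η`, and since `Φ` is
increasing, a smaller `g` forces a larger solution. For the lower bound, `δ` is the standard normal
mass of `[-√n a_S, √n a_S]` shifted by `-√n η`, which is less than the mass `2 Φ(√n a_S) - 1` of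
the centred interval: as a function of the shift `t > 0`, that mass has derivative
`φ(x + t) - φ(x - t) < 0`. -/

open Set

lemma continuous_gaussianPDFReal (μ : ℝ) (v : ℝ≥0) : Continuous (gaussianPDFReal μ v) := by
  unfold gaussianPDFReal
  fun_prop

lemma gaussianPDFReal_lt_gaussianPDFReal {μ : ℝ} {v : ℝ≥0} (hv : v ≠ 0) {x y : ℝ}
    (h : (x - μ) ^ 2 < (y - μ) ^ 2) : gaussianPDFReal μ v y < gaussianPDFReal μ v x := by
  have hv' : (0 : ℝ) < v := by positivity
  unfold gaussianPDFReal
  gcongr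

lemma gaussianPDFReal_zero_neg (v : ℝ≥0) (x : ℝ) :
    gaussianPDFReal 0 v (-x) = gaussianPDFReal 0 v x := by
  simp [gaussianPDFReal]

lemma stdNormCDF_eq_setIntegral (x : ℝ) :
    stdNormCDF x = ∫ t in Iic x, gaussianPDFReal 0 1 t := by
  rw [stdNormCDF, gaussianReal_apply_eq_integral 0 one_ne_zero, ENNReal.toReal_ofReal
    (setIntegral_nonneg measurableSet_Iic fun t _ => gaussianPDFReal_nonneg 0 1 t)]

lemma stdNormCDF_sub_stdNormCDF (x y : ℝ) :
    stdNormCDF y - stdNormCDF x = ∫ t in x..y, gaussianPDFReal 0 1 t := by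
  have hφ := integrable_gaussianPDFReal 0 1
  rw [stdNormCDF_eq_setIntegral, stdNormCDF_eq_setIntegral,
    intervalIntegral.integral_Iic_sub_Iic hφ.integrableOn hφ.integrableOn]

lemma hasDerivAt_stdNormCDF (x : ℝ) : HasDerivAt stdNormCDF (gaussianPDFReal 0 1 x) x := by
  have hFTC := ((continuous_gaussianPDFReal 0 1).integral_hasStrictDerivAt 0 x).hasDerivAt
  have : stdNormCDF = fun y => stdNormCDF 0 + ∫ t in (0 : ℝ)..y, gaussianPDFReal 0 1 t := by
    ext y
    rw [← stdNormCDF_sub_stdNormCDF]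
    ring
  rw [this]
  exact hFTC.const_add _

lemma continuous_stdNormCDF : Continuous stdNormCDF :=
  continuous_iff_continuousAt.2 fun x => (hasDerivAt_stdNormCDF x).continuousAt

lemma stdNormCDF_strictMono : StrictMono stdNormCDF :=
  strictMono_of_hasDerivAt_pos hasDerivAt_stdNormCDF fun x => gaussianPDFReal_pos 0 1 x one_ne_zero

lemma stdNormCDF_add_stdNormCDF_neg (x : ℝ) : stdNormCDF x + stdNormCDF (-x) = 1 := by
  have hφ := integrable_gaussianPDFReal 0 1
  have hneg : stdNormCDF (-x) = ∫ t in Ioi x, gaussianPDFReal 0 1 t := by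
    have := integral_comp_neg_Iic (-x) (gaussianPDFReal 0 1)
    simpa only [gaussianPDFReal_zero_neg, neg_neg, ← stdNormCDF_eq_setIntegral] using this
  rw [stdNormCDF_eq_setIntegral, hneg,
    intervalIntegral.integral_Iic_add_Ioi hφ.integrableOn hφ.integrableOn,
    integral_gaussianPDFReal_eq_one 0 one_ne_zero]

lemma stdNormCDF_stdNormCDFInv {p : ℝ} (hp0 : 0 < p) (hp1 : p < 1) :
    stdNormCDF (stdNormCDFInv p) = p := by
  refine Function.invFun_eq (mem_range_of_exists_le_of_exists_ge continuous_stdNormCDF ?_ ?_)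
  · rw [stdNormCDF_eq_cdf]
    exact ((tendsto_cdf_atBot _).eventually_le_const hp0).exists
  · rw [stdNormCDF_eq_cdf]
    exact ((tendsto_cdf_atTop _).eventually_const_le hp1).exists

lemma stdNormCDFInv_lt_iff {p : ℝ} (hp0 : 0 < p) (hp1 : p < 1) (x : ℝ) :
    stdNormCDFInv p < x ↔ p < stdNormCDF x := by
  rw [← stdNormCDF_strictMono.lt_iff_lt, stdNormCDF_stdNormCDFInv hp0 hp1]

lemma lt_of_stdNormCDF_sub_pos {x y : ℝ} (h : 0 < stdNormCDF x - stdNormCDF y) : y < x :=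
  stdNormCDF_strictMono.lt_iff_lt.1 (sub_pos.1 h)

lemma stdNormCDF_sub_lt_sub {x x' y y' : ℝ} (hx : x ≤ x') (hy : y' < y) :
    stdNormCDF x - stdNormCDF y < stdNormCDF x' - stdNormCDF y' := by
  linarith [stdNormCDF_strictMono.monotone hx, stdNormCDF_strictMono hy]

lemma stdNormCDF_translate_sub_lt {x h : ℝ} (hx : 0 < x) (hh : 0 < h) :
    stdNormCDF (x - h) - stdNormCDF (-x - h) < stdNormCDF x - stdNormCDF (-x) := by
  let f t := stdNormCDF (x - t) - stdNormCDF (-x - t)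
  have hf : ∀ t, HasDerivAt f (gaussianPDFReal 0 1 (x + t) - gaussianPDFReal 0 1 (x - t)) t := by
    intro t
    have hr := (hasDerivAt_stdNormCDF (-x - t)).comp_const_sub (-x) t
    rw [show -x - t = -(x + t) by ring, gaussianPDFReal_zero_neg] at hr
    have hl := (hasDerivAt_stdNormCDF (x - t)).comp_const_sub x t
    rw [← neg_sub_neg]
    exact hl.sub hr
  have hanti : StrictAntiOn f (Ici 0) := by
    refine strictAntiOn_of_hasDerivWithinAt_neg (convex_Ici 0)
      (fun t _ => (hf t).continuousAt.continuousWithinAt) (fun t _ => (hf t).hasDerivWithinAt) ?_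
    intro t ht
    rw [interior_Ici, mem_Ioi] at ht
    have := gaussianPDFReal_lt_gaussianPDFReal (μ := 0) one_ne_zero
      (show (x - t - 0) ^ 2 < (x + t - 0) ^ 2 by nlinarith)
    linarith
  simpa [f] using hanti self_mem_Ici hh.le hh

theorem stmt_9_general (n : ℕ) (hn : 1 ≤ n) (η : ℝ) (hη : 0 < η) (δ : ℝ) (hδ0 : 0 < δ)
    (hδ1 : δ < 1) (aS aH aA : ℝ) (haA : 0 ≤ aA)
    (heqS : stdNormCDF (Real.sqrt n * (aS - η)) - stdNormCDF (Real.sqrt n * (-aS - η)) = δ)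
    (heqH : stdNormCDF (Real.sqrt n * (aH - η)) - stdNormCDF (-(Real.sqrt n * aH)) = δ)
    (heqA : stdNormCDF (Real.sqrt n * (aA - η)) -
      stdNormCDF (-(Real.sqrt n * Real.sqrt (aA ^ 2 + η ^ 2))) = δ) :
    aH > aA ∧ aA > aS ∧ aS > (Real.sqrt n)⁻¹ * stdNormCDFInv ((1 + δ) / 2) := by
  set s := Real.sqrt n
  have hs : 0 < s := Real.sqrt_pos.2 (by exact_mod_cast hn)
  have haS_pos : 0 < aS := by
    have := lt_of_stdNormCDF_sub_pos (heqS ▸ hδ0)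
    nlinarith
  have hA_sqrt : aA < Real.sqrt (aA ^ 2 + η ^ 2) := (Real.lt_sqrt haA).2 (by nlinarith)
  refine ⟨?_, ?_, ?_⟩
  · by_contra! h
    have := stdNormCDF_sub_lt_sub (x := s * (aH - η)) (x' := s * (aA - η))
      (y := -(s * aH)) (y' := -(s * Real.sqrt (aA ^ 2 + η ^ 2))) (by nlinarith) (by nlinarith)
    linarith
  · by_contra! h
    have hsq : Real.sqrt (aA ^ 2 + η ^ 2) < aS + η :=
      (Real.sqrt_lt' (by linarith)).2 (by nlinarith)
    have := stdNormCDF_sub_lt_sub (x := s * (aA - η)) (x' := s * (aS - η))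
      (y := -(s * Real.sqrt (aA ^ 2 + η ^ 2))) (y' := s * (-aS - η)) (by nlinarith) (by nlinarith)
    linarith
  · have hkey := stdNormCDF_translate_sub_lt (mul_pos hs haS_pos) (mul_pos hs hη)
    rw [← mul_sub, show -(s * aS) - s * η = s * (-aS - η) by ring, heqS] at hkey
    rw [gt_iff_lt, inv_mul_lt_iff₀ hs, stdNormCDFInv_lt_iff (by linarith) (by linarith)]
    linarith [stdNormCDF_add_stdNormCDF_neg (s * aS)]

/-- Ordering of the half-lengths of the shortest δ-level intervals:
`a_{n,H}* > a_{n,A}* > a_{n,S}* > n^{-1/2} Φ⁻¹((1+δ)/2)`. -/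
theorem stmt_9 (n : ℕ) (hn : 1 ≤ n) (η : ℝ) (hη : 0 < η) (δ : ℝ) (hδ0 : 0 < δ)
    (hδ1 : δ < 1) (aS aH aA : ℝ) (haS : 0 ≤ aS) (haH : 0 ≤ aH) (haA : 0 ≤ aA)
    (heqS : stdNormCDF (Real.sqrt n * (aS - η)) - stdNormCDF (Real.sqrt n * (-aS - η)) = δ)
    (heqH : stdNormCDF (Real.sqrt n * (aH - η)) - stdNormCDF (-(Real.sqrt n * aH)) = δ)
    (heqA : stdNormCDF (Real.sqrt n * (aA - η)) -
      stdNormCDF (-(Real.sqrt n * Real.sqrt (aA ^ 2 + η ^ 2))) = δ) :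
    aH > aA ∧ aA > aS ∧ aS > (Real.sqrt n)⁻¹ * stdNormCDFInv ((1 + δ) / 2) :=
  stmt_9_general n hn η hη δ hδ0 hδ1 aS aH aA haA heqS heqH heqA
end
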